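/- arXiv:2311.01801 — 3 statements merged into one kernel-verified Lean document; each statement's English description precedes it below -/
import Mathlib

section
/- For all complex numbers z₁, z₂ one has |Im[ (conj(z₁ − z₂)) · (z₁ log|z₁| − z₂ log|z₂|) ]| ≤ |z₁ − z₂|², where the expression z log|z| is interpreted as 0 when z = 0. -/
/-! Put `w = conj z₁ * z₂`. The imaginary part in question is `(log ‖z₁‖ - log ‖z₂‖) * Im w`,
while `‖z₁ - z₂‖² = (‖z₁‖ - ‖z₂‖)² + 2 (‖w‖ - Re w)` and `(Im w)² ≤ 2 ‖w‖ (‖w‖ - Re w)`.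
The bound `(log a - log b)² a b ≤ 4 (a - b)²`, a consequence of `log t ≤ t - 1`, then
reduces the claim to AM–GM for the two summands of `‖z₁ - z₂‖²`. -/

open Real ComplexConjugate

lemma Real.log_sub_log_mul_le_sq_sub_sq {x y : ℝ} (hy : 0 < y) (hyx : y ≤ x) :
    (log x - log y) * (x * y) ≤ x ^ 2 - y ^ 2 := by
  have hx : 0 < x := hy.trans_le hyx
  have hlog : log x - log y ≤ x / y - 1 := by
    rw [← log_div hx.ne' hy.ne']
    exact log_le_sub_one_of_pos (div_pos hx hy)
  calc (log x - log y) * (x * y) ≤ (x / y - 1) * (x * y) := by gcongr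
    _ = x ^ 2 - x * y := by field_simp
    _ ≤ x ^ 2 - y ^ 2 := by nlinarith

lemma Real.sq_log_sub_log_mul_le {a b : ℝ} (ha : 0 ≤ a) (hb : 0 ≤ b) :
    (log a - log b) ^ 2 * (a * b) ≤ 4 * (a - b) ^ 2 := by
  wlog hba : b ≤ a generalizing a b
  · have := this hb ha (le_of_not_ge hba)
    linarith [show (log b - log a) ^ 2 = (log a - log b) ^ 2 by ring,
      show (b - a) ^ 2 = (a - b) ^ 2 by ring, mul_comm a b]
  rcases hb.eq_or_lt with rfl | hb
  · simp only [mul_zero, sub_zero]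
    positivity
  -- with `a = x ^ 2`, `b = y ^ 2` this is the square of the previous inequality
  obtain ⟨x, hx, rfl⟩ : ∃ x, 0 ≤ x ∧ a = x ^ 2 := ⟨√a, sqrt_nonneg a, (sq_sqrt ha).symm⟩
  obtain ⟨y, hy, rfl⟩ : ∃ y, 0 ≤ y ∧ b = y ^ 2 := ⟨√b, sqrt_nonneg b, (sq_sqrt hb.le).symm⟩
  have hy : 0 < y := hy.lt_of_ne (by rintro rfl; simp at hb)
  have hyx : y ≤ x := (sq_le_sq₀ hy.le hx).1 hba
  have hxy : 0 ≤ (log x - log y) * (x * y) :=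
    mul_nonneg (sub_nonneg.2 (log_le_log hy hyx)) (by positivity)
  calc (log (x ^ 2) - log (y ^ 2)) ^ 2 * (x ^ 2 * y ^ 2)
        = 4 * ((log x - log y) * (x * y)) ^ 2 := by
        simp only [log_pow]
        ring
    _ ≤ 4 * (x ^ 2 - y ^ 2) ^ 2 := by gcongr; exact log_sub_log_mul_le_sq_sub_sq hy hyx

lemma abs_mul_le_add_of_sq_mul_le {L I m s d : ℝ} (hL : L ^ 2 * m ≤ 4 * s)
    (hI : I ^ 2 ≤ 2 * m * d) (hs : 0 ≤ s) (hd : 0 ≤ d) : |L * I| ≤ s + 2 * d := by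
  refine abs_le_of_sq_le_sq ?_ (by positivity)
  calc (L * I) ^ 2 = L ^ 2 * I ^ 2 := mul_pow L I 2
    _ ≤ L ^ 2 * (2 * m * d) := by gcongr
    _ = 2 * d * (L ^ 2 * m) := by ring
    _ ≤ 2 * d * (4 * s) := by gcongr
    _ ≤ (s + 2 * d) ^ 2 := by nlinarith [sq_nonneg (s - 2 * d)]

namespace Complex

lemma im_sq_le_two_mul_norm_mul_norm_sub_re (w : ℂ) : w.im ^ 2 ≤ 2 * ‖w‖ * (‖w‖ - w.re) := by
  have hnorm : ‖w‖ ^ 2 = w.re ^ 2 + w.im ^ 2 := by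
    rw [Complex.sq_norm, normSq_apply]
    ring
  have hre := abs_le.1 (abs_re_le_norm w)
  nlinarith [mul_le_mul_of_nonneg_left (by linarith : ‖w‖ + w.re ≤ 2 * ‖w‖)
    (by linarith : 0 ≤ ‖w‖ - w.re)]

lemma norm_sub_sq_eq_sq_norm_sub_norm_add (z₁ z₂ : ℂ) :
    ‖z₁ - z₂‖ ^ 2 = (‖z₁‖ - ‖z₂‖) ^ 2 + 2 * (‖z₁‖ * ‖z₂‖ - (conj z₁ * z₂).re) := by
  rw [sub_sq (‖z₁‖), Complex.sq_norm, Complex.sq_norm z₁, Complex.sq_norm z₂]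
  simp only [normSq_apply, mul_re, sub_re, sub_im, conj_re, conj_im]
  ring

lemma im_conj_sub_mul_sub_mul_ofReal (z₁ z₂ : ℂ) (a b : ℝ) :
    (conj (z₁ - z₂) * (z₁ * a - z₂ * b)).im = (a - b) * (conj z₁ * z₂).im := by
  simp only [mul_im, mul_re, sub_re, sub_im, conj_re, conj_im, map_sub, ofReal_re, ofReal_im]
  ring

end Complex

/-- For all complex numbers `z₁, z₂`,
`|Im[ conj(z₁ - z₂) * (z₁ log|z₁| - z₂ log|z₂|) ]| ≤ |z₁ - z₂|²`.
Here `Real.log 0 = 0`, so `z * log |z|` is `0` when `z = 0`. -/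
theorem abs_im_conj_sub_mul_log_le_sq (z₁ z₂ : ℂ) :
    |((starRingEnd ℂ) (z₁ - z₂) *
        (z₁ * (Real.log ‖z₁‖ : ℂ) - z₂ * (Real.log ‖z₂‖ : ℂ))).im|
      ≤ ‖z₁ - z₂‖ ^ 2 := by
  rw [Complex.im_conj_sub_mul_sub_mul_ofReal, Complex.norm_sub_sq_eq_sq_norm_sub_norm_add]
  have hw : ‖conj z₁ * z₂‖ = ‖z₁‖ * ‖z₂‖ := by simp
  have him := (conj z₁ * z₂).im_sq_le_two_mul_norm_mul_norm_sub_re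
  have hre := Complex.re_le_norm (conj z₁ * z₂)
  rw [hw] at him hre
  exact abs_mul_le_add_of_sq_mul_le (sq_log_sub_log_mul_le (norm_nonneg _) (norm_nonneg _))
    him (sq_nonneg _) (sub_nonneg.2 hre)
end

section
/- Let θ : ℂ → ℝ be Lipschitz continuous with Lipschitz constant L, satisfying 0 ≤ θ(z) ≤ 1 for all z ∈ ℂ, θ(z) = 1 for |z| ≤ 1, and θ(z) = 0 for |z| ≥ 2. Define g₂(z) = (1 − θ(z)) · z · log(|z|²), with g₂(0) = 0. Then there exists a constant C > 0, depending only on L, such that |g₂(z) − g₂(w)| ≤ C (log⁺|z| + log⁺|w|) |z − w| for all z, w ∈ ℂ, where log⁺ t = max(log t, 0) for t > 0 and log⁺ 0 = 0. -/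
/-!
Since `θ = 1` on the unit disc, `g₂(z) = 2 (1 - θ z) log⁺|z| · z`, and the weight `1 - θ z` is itself
`O(log⁺|z|)`: it vanishes for `|z| ≤ 1`, is at most `L (|z| - 1) ≤ 2 L log |z|` for `1 ≤ |z| ≤ 2`,
and at most `1 ≤ 2 log |z|` beyond. For `|w| ≤ |z|` one splits `g₂ z - g₂ w` into the variation
of `z`, of `log⁺`, and of `θ`; the `log⁺` part is controlled by `|w| (log⁺|z| - log⁺|w|) ≤ |z| - |w|`
and the `θ` part vanishes unless `|w| < 2`.
-/

open Real

namespace Real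

theorem mul_sub_posLog_le {a b : ℝ} (hb : 0 ≤ b) (hba : b ≤ a) :
    b * (log⁺ a - log⁺ b) ≤ a - b := by
  rcases hb.eq_or_lt with rfl | hb
  · simpa using hb.trans hba
  have hquot : 1 ≤ a / b := (one_le_div hb).2 hba
  have hmul : log⁺ a ≤ log⁺ b + log⁺ (a / b) := by
    simpa [mul_div_cancel₀ a hb.ne'] using posLog_mul (x := b) (y := a / b)
  have hlog : log⁺ (a / b) ≤ a / b - 1 := by
    rw [posLog_eq_log (by rwa [abs_of_nonneg (by linarith)])]
    exact log_le_sub_one_of_pos (by linarith)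
  calc b * (log⁺ a - log⁺ b) ≤ b * (a / b - 1) := mul_le_mul_of_nonneg_left (by linarith) hb.le
    _ = a - b := by field_simp

theorem sub_one_le_two_mul_log {a : ℝ} (ha : 1 ≤ a) (ha₂ : a ≤ 2) : a - 1 ≤ 2 * log a := by
  have ha₀ : 0 < a := by linarith
  have h := one_sub_inv_le_log_of_pos ha₀
  have : a - 1 = a * (1 - a⁻¹) := by field_simp
  nlinarith

end Real

noncomputable def g₂ (θ : ℂ → ℝ) (z : ℂ) : ℂ :=
  ((1 : ℝ) - θ z : ℝ) * z * (Real.log (‖z‖ ^ 2) : ℂ)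

section Cutoff

variable {L : NNReal} {θ : ℂ → ℝ}

theorem g₂_eq_mul_posLog (h1 : ∀ z : ℂ, ‖z‖ ≤ 1 → θ z = 1) (z : ℂ) :
    g₂ θ z = ((2 * ((1 - θ z) * log⁺ ‖z‖) : ℝ) : ℂ) * z := by
  have hweight : (1 - θ z) * Real.log (‖z‖ ^ 2) = 2 * ((1 - θ z) * log⁺ ‖z‖) := by
    rcases le_or_gt ‖z‖ 1 with hz | hz
    · simp [h1 z hz]
    · rw [Real.log_pow, posLog_eq_log (by rw [abs_norm]; exact hz.le)]
      push_cast
      ring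
  rw [g₂, ← hweight]
  push_cast
  ring

theorem one_sub_le_mul_norm_sub_one (hθ : LipschitzWith L θ)
    (h1 : ∀ z : ℂ, ‖z‖ ≤ 1 → θ z = 1) {z : ℂ} (hz : 1 ≤ ‖z‖) :
    1 - θ z ≤ L * (‖z‖ - 1) := by
  have hz₀ : 0 < ‖z‖ := by linarith
  set u : ℂ := ((‖z‖⁻¹ : ℝ) : ℂ) * z
  have hu : θ u = 1 := h1 u (by simp [u, hz₀.ne'])
  have hzu : ‖z - u‖ = ‖z‖ - 1 := by
    have : z - u = ((1 - ‖z‖⁻¹ : ℝ) : ℂ) * z := by simp only [u]; push_cast; ring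
    rw [this, norm_mul, Complex.norm_real, Real.norm_eq_abs,
      abs_of_nonneg (sub_nonneg.2 (inv_le_one_of_one_le₀ hz)), sub_mul, inv_mul_cancel₀ hz₀.ne',
      one_mul]
  have := hθ.dist_le_mul z u
  rw [Real.dist_eq, Complex.dist_eq, hu, hzu, abs_sub_comm] at this
  exact (le_abs_self _).trans this

theorem one_sub_le_posLog (hθ : LipschitzWith L θ) (hθ₀ : ∀ z : ℂ, 0 ≤ θ z)
    (h1 : ∀ z : ℂ, ‖z‖ ≤ 1 → θ z = 1) (z : ℂ) :
    1 - θ z ≤ 2 * (L + 1) * log⁺ ‖z‖ := by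
  rcases le_or_gt ‖z‖ 1 with hz | hz
  · rw [h1 z hz, sub_self]; exact mul_nonneg (by positivity) posLog_nonneg
  have hlog : log⁺ ‖z‖ = Real.log ‖z‖ := posLog_eq_log (by rw [abs_norm]; exact hz.le)
  have hlog₀ : 0 ≤ Real.log ‖z‖ := Real.log_nonneg hz.le
  rw [hlog]
  rcases le_or_gt ‖z‖ 2 with hz₂ | hz₂
  · have hnear := one_sub_le_mul_norm_sub_one hθ h1 hz.le
    have := Real.sub_one_le_two_mul_log hz.le hz₂
    nlinarith [L.coe_nonneg]
  · have : 1 / 2 < Real.log ‖z‖ :=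
      (by linarith [Real.log_two_gt_d9] : 1 / 2 < Real.log 2).trans_le
        (Real.log_le_log (by norm_num) hz₂.le)
    nlinarith [hθ₀ z, L.coe_nonneg]

theorem abs_sub_mul_norm_le (hθ : LipschitzWith L θ) (h2 : ∀ z : ℂ, 2 ≤ ‖z‖ → θ z = 0)
    {z w : ℂ} (hwz : ‖w‖ ≤ ‖z‖) :
    |θ z - θ w| * ‖w‖ ≤ 2 * L * ‖z - w‖ := by
  rcases le_or_gt 2 ‖w‖ with hw | hw
  · rw [h2 w hw, h2 z (hw.trans hwz), sub_self, abs_zero, zero_mul]; positivity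
  have hlip : |θ z - θ w| ≤ L * ‖z - w‖ := by
    simpa [Real.dist_eq, Complex.dist_eq] using hθ.dist_le_mul z w
  calc |θ z - θ w| * ‖w‖ ≤ (L * ‖z - w‖) * 2 := by gcongr
    _ = 2 * L * ‖z - w‖ := by ring

theorem norm_g₂_sub_le_of_norm_le (hθ : LipschitzWith L θ)
    (h01 : ∀ z : ℂ, 0 ≤ θ z ∧ θ z ≤ 1) (h1 : ∀ z : ℂ, ‖z‖ ≤ 1 → θ z = 1)
    (h2 : ∀ z : ℂ, 2 ≤ ‖z‖ → θ z = 0) {z w : ℂ} (hwz : ‖w‖ ≤ ‖z‖) :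
    ‖g₂ θ z - g₂ θ w‖ ≤ (4 * L + 6) * (log⁺ ‖z‖ + log⁺ ‖w‖) * ‖z - w‖ := by
  set s := 1 - θ z
  set ℓz := log⁺ ‖z‖
  set ℓw := log⁺ ‖w‖
  have hs₀ : 0 ≤ s := by linarith [(h01 z).2]
  have hs₁ : s ≤ 1 := by linarith [(h01 z).1]
  have hℓz : 0 ≤ ℓz := posLog_nonneg
  have hℓw : 0 ≤ ℓw := posLog_nonneg
  have hℓ : ℓw ≤ ℓz := posLog_le_posLog (norm_nonneg w) hwz
  have hsplit : g₂ θ z - g₂ θ w = 2 * ((s * ℓz : ℝ) * (z - w) + (s * (ℓz - ℓw) : ℝ) * w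
      + ((θ w - θ z) * ℓw : ℝ) * w) := by
    simp only [s, ℓz, ℓw]
    rw [g₂_eq_mul_posLog h1, g₂_eq_mul_posLog h1]
    push_cast
    ring
  have hmove : s * (ℓz - ℓw) * ‖w‖ ≤ 2 * (L + 1) * ℓz * ‖z - w‖ := by
    have hlog := Real.mul_sub_posLog_le (norm_nonneg w) hwz
    have hnorm : ‖z‖ - ‖w‖ ≤ ‖z - w‖ := norm_sub_norm_le z w
    calc s * (ℓz - ℓw) * ‖w‖ ≤ s * ‖z - w‖ := by nlinarith
      _ ≤ 2 * (L + 1) * ℓz * ‖z - w‖ := by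
        gcongr; exact one_sub_le_posLog hθ (fun z ↦ (h01 z).1) h1 z
  have hcut : |θ w - θ z| * ℓw * ‖w‖ ≤ 2 * L * ℓw * ‖z - w‖ := by
    have := abs_sub_mul_norm_le hθ h2 hwz
    rw [abs_sub_comm]
    nlinarith
  rw [hsplit, norm_mul, Complex.norm_two]
  refine (mul_le_mul_of_nonneg_left (norm_add₃_le ..) zero_le_two).trans ?_
  simp only [norm_mul, Complex.norm_real, Real.norm_eq_abs, abs_of_nonneg hs₀,
    abs_of_nonneg hℓz, abs_of_nonneg (sub_nonneg.2 hℓ), abs_of_nonneg hℓw]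
  have : s * ℓz * ‖z - w‖ ≤ ℓz * ‖z - w‖ :=
    mul_le_mul_of_nonneg_right (mul_le_of_le_one_left hℓz hs₁) (norm_nonneg _)
  nlinarith [L.coe_nonneg, norm_nonneg (z - w), mul_nonneg hℓw (norm_nonneg (z - w))]

end Cutoff

/-- Let `θ : ℂ → ℝ` be `L`-Lipschitz, `0 ≤ θ ≤ 1`, `θ = 1` on `{|z| ≤ 1}` and `θ = 0` on
`{|z| ≥ 2}`, and set `g₂(z) = (1 - θ(z)) z log(|z|²)` (which is `0` at `z = 0`).
There is `C > 0`, depending only on `L`, with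
`|g₂(z) - g₂(w)| ≤ C (log⁺|z| + log⁺|w|) |z - w|` for all `z, w`,
where `log⁺ t = max (log t) 0`. -/
theorem g_two_log_lipschitz (L : NNReal) :
    ∃ C : ℝ, 0 < C ∧
      ∀ θ : ℂ → ℝ, LipschitzWith L θ →
        (∀ z : ℂ, 0 ≤ θ z ∧ θ z ≤ 1) →
        (∀ z : ℂ, ‖z‖ ≤ 1 → θ z = 1) →
        (∀ z : ℂ, 2 ≤ ‖z‖ → θ z = 0) →
        ∀ z w : ℂ,
          ‖((1 : ℝ) - θ z : ℝ) * z * (Real.log (‖z‖ ^ 2) : ℂ)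
              - ((1 : ℝ) - θ w : ℝ) * w * (Real.log (‖w‖ ^ 2) : ℂ)‖
            ≤ C * (max (Real.log ‖z‖) 0 + max (Real.log ‖w‖) 0)
                * ‖z - w‖ := by
  refine ⟨4 * L + 6, by positivity, fun θ hθ h01 h1 h2 z w ↦ ?_⟩
  simp only [max_comm _ (0 : ℝ), ← posLog_apply]
  change ‖g₂ θ z - g₂ θ w‖ ≤ _
  rcases le_total ‖w‖ ‖z‖ with hwz | hzw
  · exact norm_g₂_sub_le_of_norm_le hθ h01 h1 h2 hwz
  · rw [norm_sub_rev, norm_sub_rev z, add_comm (log⁺ ‖z‖)]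
    exact norm_g₂_sub_le_of_norm_le hθ h01 h1 h2 hzw
end

section
/- Let θ : ℂ → ℝ be Lipschitz continuous with Lipschitz constant L, satisfying 0 ≤ θ ≤ 1, θ(z) = 1 for |z| ≤ 1 and θ(z) = 0 for |z| ≥ 2, and set g₁(z) = θ(z)·z·log(|z|²) with g₁(0) = 0. Let α ∈ (0,1), d ≥ 1, and let ω ⊆ ℝ^d be a measurable set of finite Lebesgue measure |ω|. Then there exists C > 0, depending only on α and L, such that for all u, v ∈ L²(ω): ‖g₁ ∘ u − g₁ ∘ v‖_{L²(ω)} ≤ C |ω|^{(1−α)/2} ‖u − v‖_{L²(ω)}^α. -/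
/-!
Write `g₁ = θ • h` with `h z = z log |z|²`. On the disc of radius `2`, `h` is `α`-Hölder for every
`α < 1`: for `|w| ≤ |z|`, `h z - h w = (z - w) log |z|² + w (log |z|² - log |w|²)`; the first term
is at most `δ^α · 2 δ^(1-α) |log |z||` with `δ = |z - w| ≤ 2|z|`, and `|z|^(1-α) |log |z||` is
bounded, while the second is at most `2 (|z| - |w|)`. The cutoff `θ` is Lipschitz and bounded,
hence `α`-Hölder, and vanishes off the disc, so `g₁` is `α`-Hölder on `ℂ`. For an `α`-Hölder `f`,
`‖f ∘ u - f ∘ v‖_{L²} ≤ C ‖|u - v|^α‖_{L²} = C ‖u - v‖_{L^{2α}}^α`, and on a finite measure space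
Hölder's inequality gives `‖·‖_{L^{2α}} ≤ |ω|^(1/(2α) - 1/2) ‖·‖_{L²}`.
-/

open MeasureTheory Metric
open scoped NNReal ENNReal

namespace Real

lemma rpow_mul_abs_log_le {t r : ℝ} (ht0 : 0 < t) (ht1 : t ≤ 1) (hr0 : 0 < r) (hr2 : r ≤ 2) :
    r ^ t * |log r| ≤ 2 + 1 / t := by
  rcases le_total r 1 with hr1 | hr1
  · have h := abs_log_mul_self_rpow_lt r t hr0 hr1 ht0
    rw [abs_mul, abs_of_pos (rpow_pos_of_pos hr0 t)] at h
    linarith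
  · have hrt : r ^ t ≤ 2 := (rpow_le_self_of_one_le hr1 ht1).trans hr2
    have hlog : |log r| ≤ 1 := by
      rw [abs_of_nonneg (log_nonneg hr1)]
      linarith [log_le_sub_one_of_pos hr0]
    have : 0 ≤ 1 / t := by positivity
    nlinarith [abs_nonneg (log r), rpow_nonneg hr0.le t]

lemma mul_abs_log_le_rpow {α δ r : ℝ} (hα0 : 0 ≤ α) (hα1 : α < 1) (hδ : 0 ≤ δ)
    (hδr : δ ≤ 2 * r) (hr2 : r ≤ 2) :
    δ * |log r| ≤ 2 * (2 + 1 / (1 - α)) * δ ^ α := by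
  rcases hδ.eq_or_lt with rfl | hδ
  · simp only [zero_mul]; positivity
  have hr0 : 0 < r := by linarith
  have hsplit : δ = δ ^ (1 - α) * δ ^ α := by rw [← rpow_add hδ]; simp
  have hδr' : δ ^ (1 - α) ≤ 2 * r ^ (1 - α) :=
    calc δ ^ (1 - α) ≤ (2 * r) ^ (1 - α) := rpow_le_rpow hδ.le hδr (by linarith)
      _ = 2 ^ (1 - α) * r ^ (1 - α) := mul_rpow zero_le_two hr0.le
      _ ≤ 2 * r ^ (1 - α) := by
        gcongr
        exact rpow_le_self_of_one_le one_le_two (by linarith)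
  calc δ * |log r| = δ ^ (1 - α) * |log r| * δ ^ α := by nth_rewrite 1 [hsplit]; ring
    _ ≤ 2 * r ^ (1 - α) * |log r| * δ ^ α := by gcongr
    _ = 2 * (r ^ (1 - α) * |log r|) * δ ^ α := by ring
    _ ≤ 2 * (2 + 1 / (1 - α)) * δ ^ α := by
      gcongr; exact rpow_mul_abs_log_le (by linarith) (by linarith) hr0 hr2

lemma le_mul_rpow_of_le_of_le {y δ D α : ℝ} (hα0 : 0 ≤ α) (hα1 : α ≤ 1) (hδ : 0 ≤ δ)
    (hD : 1 ≤ D) (hyδ : y ≤ δ) (hyD : y ≤ D) : y ≤ D * δ ^ α := by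
  rcases le_total δ 1 with hδ1 | hδ1
  · calc y ≤ δ ^ α := hyδ.trans (self_le_rpow_of_le_one hδ hδ1 hα1)
      _ ≤ D * δ ^ α := le_mul_of_one_le_left (rpow_nonneg hδ α) hD
  · calc y ≤ D := hyD
      _ ≤ D * δ ^ α := le_mul_of_one_le_right (by linarith) (one_le_rpow hδ1 hα0)

end Real

section Holder

variable {X : Type*} [PseudoMetricSpace X]

lemma HolderOnWith.of_dist_le {Y : Type*} [PseudoMetricSpace Y]
    {C r : ℝ≥0} {f : X → Y} {s : Set X}
    (h : ∀ x ∈ s, ∀ y ∈ s, dist (f x) (f y) ≤ C * dist x y ^ (r : ℝ)) :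
    HolderOnWith C r f s := by
  intro x hx y hy
  rw [edist_dist, edist_dist, ENNReal.ofReal_rpow_of_nonneg dist_nonneg r.coe_nonneg,
    ← ENNReal.ofReal_coe_nnreal, ← ENNReal.ofReal_mul C.coe_nonneg]
  exact ENNReal.ofReal_le_ofReal (h x hx y hy)

lemma LipschitzWith.holderWith_of_edist_le {Y : Type*} [PseudoEMetricSpace Y] {K D r : ℝ≥0}
    {f : X → Y} (hf : LipschitzWith K f) (hD : ∀ x y, edist (f x) (f y) ≤ D) (hr : r ≤ 1) :
    HolderWith (max D K) r f :=
  HolderWith.of_le_of_le (show HolderWith D 0 f from fun x y => by simpa using hD x y)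
    (holderWith_one.2 hf) zero_le hr

lemma HolderWith.smul_of_holderOnWith {𝕜 E : Type*} [NormedField 𝕜] [SeminormedAddCommGroup E]
    [NormedSpace 𝕜 E] {C₁ C₂ M r : ℝ≥0} {s : Set X} {θ : X → 𝕜} {h : X → E}
    (hθ : HolderWith C₁ r θ) (hθ_le : ∀ x, ‖θ x‖ ≤ 1) (hθ_zero : ∀ x ∉ s, θ x = 0)
    (hh : HolderOnWith C₂ r h s) (hh_le : ∀ x ∈ s, ‖h x‖ ≤ M) :
    HolderWith (C₁ * M + C₂) r (fun x => θ x • h x) := by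
  have hθd (x y : X) : ‖θ x - θ y‖ ≤ C₁ * dist x y ^ (r : ℝ) := by
    simpa [dist_eq_norm] using hθ.dist_le x y
  have outside (x y : X) (hx : x ∉ s) : ‖θ x • h x - θ y • h y‖ ≤ C₁ * M * dist x y ^ (r : ℝ) := by
    rw [hθ_zero x hx, zero_smul, zero_sub, norm_neg, norm_smul]
    by_cases hy : y ∈ s
    · calc ‖θ y‖ * ‖h y‖ = ‖θ y - θ x‖ * ‖h y‖ := by rw [hθ_zero x hx, sub_zero]
        _ ≤ C₁ * dist x y ^ (r : ℝ) * M := by gcongr; exacts [dist_comm x y ▸ hθd y x, hh_le y hy]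
        _ = C₁ * M * dist x y ^ (r : ℝ) := by ring
    · rw [hθ_zero y hy, norm_zero, zero_mul]; positivity
  refine holderOnWith_univ.1 (HolderOnWith.of_dist_le fun x _ y _ => ?_)
  rw [dist_eq_norm]
  push_cast
  have hle : C₁ * M * dist x y ^ (r : ℝ) ≤ (C₁ * M + C₂) * dist x y ^ (r : ℝ) := by
    rw [add_mul]; exact le_add_of_nonneg_right (by positivity)
  by_cases hx : x ∈ s
  · by_cases hy : y ∈ s
    · calc ‖θ x • h x - θ y • h y‖ = ‖(θ x - θ y) • h x + θ y • (h x - h y)‖ := by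
            rw [sub_smul, smul_sub]; abel_nf
        _ ≤ ‖θ x - θ y‖ * ‖h x‖ + ‖θ y‖ * ‖h x - h y‖ := by
            grw [norm_add_le, norm_smul, norm_smul]
        _ ≤ C₁ * dist x y ^ (r : ℝ) * M + 1 * (C₂ * dist x y ^ (r : ℝ)) := by
            gcongr
            exacts [hθd x y, hh_le x hx, hθ_le y, by simpa [dist_eq_norm] using hh.dist_le hx hy]
        _ = (C₁ * M + C₂) * dist x y ^ (r : ℝ) := by ring
    · rw [norm_sub_rev]
      exact (outside y x hy).trans (dist_comm x y ▸ hle)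
  · exact (outside x y hx).trans hle

end Holder

theorem HolderWith.eLpNorm_comp_sub_comp_le {Ω E F : Type*} [MeasurableSpace Ω]
    [NormedAddCommGroup E] [NormedAddCommGroup F] {C r : ℝ≥0} {f : E → F}
    (hf : HolderWith C r f) (hr0 : 0 < r) (hr1 : r ≤ 1) {μ : Measure Ω} {p : ℝ≥0∞}
    {u v : Ω → E} (huv : AEStronglyMeasurable (fun x => u x - v x) μ) :
    eLpNorm (fun x => f (u x) - f (v x)) p μ
      ≤ C * μ Set.univ ^ ((1 - r) / p.toReal) * eLpNorm (fun x => u x - v x) p μ ^ (r : ℝ) := by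
  set g := fun x => u x - v x
  have hr : (0 : ℝ) < r := hr0
  have hpr : p * ENNReal.ofReal r ≤ p :=
    mul_le_of_le_one_right' (ENNReal.ofReal_le_one.2 hr1)
  -- `(1 / (p r) - 1 / p) * r = (1 - r) / p`, also in the degenerate cases `p = 0, ∞`
  have hexp : (1 / (p * ENNReal.ofReal r).toReal - 1 / p.toReal) * r = (1 - r) / p.toReal := by
    rw [ENNReal.toReal_mul, ENNReal.toReal_ofReal hr.le]
    rcases eq_or_ne p.toReal 0 with hp | hp
    · simp [hp]
    · field_simp
  calc eLpNorm (fun x => f (u x) - f (v x)) p μ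
      ≤ eLpNorm (fun x => (C : ℝ) * ‖g x‖ ^ (r : ℝ)) p μ := by
        refine eLpNorm_mono_real fun x => ?_
        have := hf.dist_le (u x) (v x)
        rwa [dist_eq_norm, dist_eq_norm] at this
    _ = C * eLpNorm g (p * ENNReal.ofReal r) μ ^ (r : ℝ) := by
        rw [show (fun x => (C : ℝ) * ‖g x‖ ^ (r : ℝ)) = (C : ℝ) • fun x => ‖g x‖ ^ (r : ℝ) from rfl,
          eLpNorm_const_smul, eLpNorm_norm_rpow g hr, NNReal.enorm_eq]
    _ ≤ C * (eLpNorm g p μ * μ Set.univ ^ (1 / (p * ENNReal.ofReal r).toReal - 1 / p.toReal))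
          ^ (r : ℝ) := by
        gcongr
        exact eLpNorm_le_eLpNorm_mul_rpow_measure_univ hpr huv
    _ = C * μ Set.univ ^ ((1 - r) / p.toReal) * eLpNorm g p μ ^ (r : ℝ) := by
        rw [ENNReal.mul_rpow_of_nonneg _ _ hr.le, ← ENNReal.rpow_mul, hexp]
        ring

lemma ENNReal.coe_mul_rpow_mul_rpow {a b : ℝ≥0∞} (ha : a ≠ ∞) (hb : b ≠ ∞) (C : ℝ≥0) {s t : ℝ}
    (hs : 0 ≤ s) (ht : 0 ≤ t) :
    (C : ℝ≥0∞) * a ^ s * b ^ t = ENNReal.ofReal (C * a.toReal ^ s * b.toReal ^ t) := by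
  rw [ENNReal.ofReal_mul (by positivity), ENNReal.ofReal_mul C.coe_nonneg,
    ENNReal.ofReal_coe_nnreal, ← ENNReal.ofReal_rpow_of_nonneg ENNReal.toReal_nonneg hs,
    ← ENNReal.ofReal_rpow_of_nonneg ENNReal.toReal_nonneg ht, ENNReal.ofReal_toReal ha,
    ENNReal.ofReal_toReal hb]

noncomputable def mulLogNormSq (z : ℂ) : ℂ := z * (Real.log (‖z‖ ^ 2) : ℂ)

lemma norm_mulLogNormSq (z : ℂ) : ‖mulLogNormSq z‖ = 2 * (‖z‖ * |Real.log ‖z‖|) := by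
  rw [mulLogNormSq, norm_mul, Complex.norm_real, Real.norm_eq_abs, Real.log_pow, Nat.cast_ofNat,
    abs_mul, abs_two]
  ring

lemma norm_mulLogNormSq_le {z : ℂ} (hz : ‖z‖ ≤ 2) : ‖mulLogNormSq z‖ ≤ 6 := by
  rcases eq_or_ne z 0 with rfl | hz0
  · simp [mulLogNormSq]
  have h := Real.rpow_mul_abs_log_le one_pos le_rfl (norm_pos_iff.2 hz0) hz
  rw [Real.rpow_one] at h
  rw [norm_mulLogNormSq]
  linarith

lemma norm_mulLogNormSq_sub_le {α : ℝ} (hα0 : 0 ≤ α) (hα1 : α < 1) {z w : ℂ}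
    (hwz : ‖w‖ ≤ ‖z‖) (hz : ‖z‖ ≤ 2) :
    ‖mulLogNormSq z - mulLogNormSq w‖ ≤ (12 + 4 / (1 - α)) * ‖z - w‖ ^ α := by
  have hδ : 0 ≤ ‖z - w‖ := norm_nonneg _
  have hsplit : mulLogNormSq z - mulLogNormSq w
      = (z - w) * (Real.log (‖z‖ ^ 2) : ℂ)
        + w * ((2 * (Real.log ‖z‖ - Real.log ‖w‖) : ℝ) : ℂ) := by
    simp only [mulLogNormSq, Real.log_pow]; push_cast; ring
  have hfirst : ‖(z - w) * (Real.log (‖z‖ ^ 2) : ℂ)‖ ≤ (8 + 4 / (1 - α)) * ‖z - w‖ ^ α := by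
    have hδz : ‖z - w‖ ≤ 2 * ‖z‖ := by linarith [norm_sub_le z w]
    have h := Real.mul_abs_log_le_rpow hα0 hα1 hδ hδz hz
    rw [norm_mul, Complex.norm_real, Real.norm_eq_abs, Real.log_pow, Nat.cast_ofNat, abs_mul,
      abs_two]
    calc ‖z - w‖ * (2 * |Real.log ‖z‖|) = 2 * (‖z - w‖ * |Real.log ‖z‖|) := by ring
      _ ≤ 2 * (2 * (2 + 1 / (1 - α)) * ‖z - w‖ ^ α) := by gcongr
      _ = (8 + 4 / (1 - α)) * ‖z - w‖ ^ α := by ring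
  have hsecond : ‖w * ((2 * (Real.log ‖z‖ - Real.log ‖w‖) : ℝ) : ℂ)‖ ≤ 4 * ‖z - w‖ ^ α := by
    rcases eq_or_ne w 0 with rfl | hw0
    · simp only [zero_mul, norm_zero]; positivity
    have hw : 0 < ‖w‖ := norm_pos_iff.2 hw0
    have hz0 : 0 < ‖z‖ := hw.trans_le hwz
    have hlog : ‖w‖ * (Real.log ‖z‖ - Real.log ‖w‖) ≤ ‖z‖ - ‖w‖ := by
      rw [← Real.log_div hz0.ne' hw.ne']
      have := Real.log_le_sub_one_of_pos (div_pos hz0 hw)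
      calc ‖w‖ * Real.log (‖z‖ / ‖w‖) ≤ ‖w‖ * (‖z‖ / ‖w‖ - 1) := by gcongr
        _ = ‖z‖ - ‖w‖ := by field_simp
    have hmono : 0 ≤ Real.log ‖z‖ - Real.log ‖w‖ := sub_nonneg.2 (Real.log_le_log hw hwz)
    have hdiff : ‖z‖ - ‖w‖ ≤ 2 * ‖z - w‖ ^ α :=
      Real.le_mul_rpow_of_le_of_le hα0 hα1.le hδ one_le_two (norm_sub_norm_le z w) (by linarith)
    rw [norm_mul, Complex.norm_real, Real.norm_eq_abs, abs_of_nonneg (by positivity)]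
    linarith
  calc ‖mulLogNormSq z - mulLogNormSq w‖ ≤ (8 + 4 / (1 - α)) * ‖z - w‖ ^ α + 4 * ‖z - w‖ ^ α := by
        rw [hsplit]; exact (norm_add_le _ _).trans (add_le_add hfirst hsecond)
    _ = (12 + 4 / (1 - α)) * ‖z - w‖ ^ α := by ring

lemma exists_holderOnWith_mulLogNormSq {α : ℝ≥0} (hα : α < 1) :
    ∃ C, HolderOnWith C α mulLogNormSq (closedBall 0 2) := by
  have hα1 : (α : ℝ) < 1 := hα
  refine ⟨(12 + 4 / (1 - α : ℝ)).toNNReal, HolderOnWith.of_dist_le fun z hz w hw => ?_⟩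
  rw [mem_closedBall_zero_iff] at hz hw
  have hα1' : 0 < 1 - (α : ℝ) := sub_pos.2 hα1
  rw [Real.coe_toNNReal _ (by positivity), dist_eq_norm, dist_eq_norm]
  rcases le_total ‖w‖ ‖z‖ with h | h
  · exact norm_mulLogNormSq_sub_le α.coe_nonneg hα1 h hz
  · rw [norm_sub_rev, norm_sub_rev z]
    exact norm_mulLogNormSq_sub_le α.coe_nonneg hα1 h hw

/-- With `θ` an `L`-Lipschitz cutoff as before and `g₁(z) = θ(z) z log(|z|²)`,
for every `α ∈ (0,1)` there is `C > 0` depending only on `α` and `L` such that for every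
`d ≥ 1`, every measurable `ω ⊆ ℝ^d` of finite measure, and all `u, v ∈ L²(ω)`,
`‖g₁∘u - g₁∘v‖_{L²(ω)} ≤ C |ω|^{(1-α)/2} ‖u - v‖_{L²(ω)}^α`. -/
theorem g_one_L2_holder (α : ℝ) (hα : α ∈ Set.Ioo (0 : ℝ) 1) (L : NNReal) :
    ∃ C : ℝ, 0 < C ∧
      ∀ θ : ℂ → ℝ, LipschitzWith L θ →
        (∀ z : ℂ, 0 ≤ θ z ∧ θ z ≤ 1) →
        (∀ z : ℂ, ‖z‖ ≤ 1 → θ z = 1) →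
        (∀ z : ℂ, 2 ≤ ‖z‖ → θ z = 0) →
        ∀ (d : ℕ), 1 ≤ d →
        ∀ ω : Set (EuclideanSpace ℝ (Fin d)), MeasurableSet ω → volume ω < ⊤ →
        ∀ u v : EuclideanSpace ℝ (Fin d) → ℂ,
          MemLp u 2 (volume.restrict ω) → MemLp v 2 (volume.restrict ω) →
          eLpNorm (fun x => (θ (u x) : ℂ) * u x * (Real.log (‖u x‖ ^ 2) : ℂ)
              - (θ (v x) : ℂ) * v x * (Real.log (‖v x‖ ^ 2) : ℂ))
              2 (volume.restrict ω)
            ≤ ENNReal.ofReal (C * (volume ω).toReal ^ ((1 - α) / 2) *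
                (eLpNorm (fun x => u x - v x) 2 (volume.restrict ω)).toReal ^ α) := by
  lift α to ℝ≥0 using hα.1.le
  obtain ⟨hα0, hα1⟩ : 0 < α ∧ α < 1 := by exact_mod_cast hα
  obtain ⟨A, hA⟩ := exists_holderOnWith_mulLogNormSq hα1
  refine ⟨(max 1 L * 6 + A : ℝ≥0), by positivity, ?_⟩
  intro θ hθ hθ01 _ hθ2 d _ ω _ hω u v hu hv
  have hθ_edist (z w : ℂ) : edist (θ z) (θ w) ≤ (1 : ℝ≥0) := by
    rw [edist_dist, ENNReal.coe_one, ENNReal.ofReal_le_one]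
    exact Real.dist_le_of_mem_Icc_01 (hθ01 z) (hθ01 w)
  have hθ_norm (z : ℂ) : ‖θ z‖ ≤ 1 := by
    rw [Real.norm_of_nonneg (hθ01 z).1]; exact (hθ01 z).2
  have hθ_supp (z : ℂ) (hz : z ∉ closedBall 0 2) : θ z = 0 :=
    hθ2 z (le_of_lt (by simpa using hz))
  have hg : HolderWith (max 1 L * 6 + A) α (fun z => θ z • mulLogNormSq z) :=
    (hθ.holderWith_of_edist_le hθ_edist hα1.le).smul_of_holderOnWith hθ_norm hθ_supp hA
      (fun z hz => by exact_mod_cast norm_mulLogNormSq_le (mem_closedBall_zero_iff.1 hz))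
  have huv : MemLp (fun x => u x - v x) 2 (volume.restrict ω) := hu.sub hv
  have key := hg.eLpNorm_comp_sub_comp_le hα0 hα1.le huv.1 (p := 2)
  have hfun : (fun x => (θ (u x) : ℂ) * u x * (Real.log (‖u x‖ ^ 2) : ℂ)
      - (θ (v x) : ℂ) * v x * (Real.log (‖v x‖ ^ 2) : ℂ))
      = fun x => θ (u x) • mulLogNormSq (u x) - θ (v x) • mulLogNormSq (v x) := by
    funext x; simp only [mulLogNormSq, Complex.real_smul, mul_assoc]
  rw [hfun, ← ENNReal.coe_mul_rpow_mul_rpow hω.ne huv.2.ne _ (by linarith) α.coe_nonneg]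
  simpa only [Measure.restrict_apply_univ, ENNReal.toReal_ofNat] using key
end
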